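/- Let q ≥ 2 be an integer and 0 < ε₀ < (q−1)/2, and let m be an integer with m ≥ max{ 2q²−1, ((q−1)²/ε₀²)·ln(m−2) + 2 }. Let G^{(q)}(m+1,ε₀) be the set of sequences in Σ_q^{m+1} that contain at least one substring of length m whose L1-weight lies outside the interval [((q−1)/2 − ε₀)m, ((q−1)/2 + ε₀)m]. Then |G^{(q)}(m+1,ε₀)| ≤ q^{m−3}, and there exists an injective map from G^{(q)}(m+1,ε₀) into W^{(q)}(m−2, m−2, [p₁(ε₀)(m−2), p₂(ε₀)(m−2)]). -/

import Mathlib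

/-- The L1-weight of the length-`len` substring of `y` starting at 0-based position `a`. -/
def wsub {q m : ℕ} (y : Fin m → ZMod q) (a len : ℕ) (h : a + len ≤ m) : ℕ :=
  ∑ i : Fin len, (y ⟨a + (i : ℕ), by omega⟩).val

/-- `G^{(q)}(m+1,ε₀)`: sequences in `Σ_q^{m+1}` containing at least one substring of
length `m` whose L1-weight lies outside `[((q−1)/2 − ε₀)m, ((q−1)/2 + ε₀)m]`. -/
def Gset (q m : ℕ) (ε₀ : ℝ) : Set (Fin (m + 1) → ZMod q) :=
  {y | ∃ a : ℕ, ∃ h : a + m ≤ m + 1,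
    ¬((((q : ℝ) - 1) / 2 - ε₀) * (m : ℝ) ≤ (wsub y a m h : ℝ) ∧
      (wsub y a m h : ℝ) ≤ (((q : ℝ) - 1) / 2 + ε₀) * (m : ℝ))}

/-- `W^{(q)}(n,ℓ,[lo,hi])`: sequences in `Σ_q^n` in which every substring of length
exactly `ℓ` has L1-weight in `[lo,hi]`. -/
def Wset (q n ℓ : ℕ) (lo hi : ℝ) : Set (Fin n → ZMod q) :=
  {z | ∀ a : ℕ, ∀ h : a + ℓ ≤ n, lo ≤ (wsub z a ℓ h : ℝ) ∧ (wsub z a ℓ h : ℝ) ≤ hi}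

/-! A sequence in `G` has an unbalanced prefix or suffix of length `m`, so `|G|` is at most `2q`
times the number of unbalanced sequences in `Σ_q^m`. Hoeffding's inequality, obtained from the
bound `q exp (t²(q-1)²/8)` on the exponential moment of a single centred symbol, bounds the number
of unbalanced sequences in `Σ_q^n` by `2 qⁿ exp (-2ε²n/(q-1)²)`. Writing `x = m - 2`, the hypothesis
on `m` says `x ≤ exp (ε²x/(q-1)²)`; together with `x ≥ 2q² - 3` it gives
`exp (2ε²m/(q-1)²) ≥ x² + 8x ≥ 4q⁴` and `exp (2ε²x/(q-1)²) ≥ x² ≥ 4`. Hence `|G| ≤ q^(m-3)`, while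
at least half of `Σ_q^(m-2)` is balanced, so `|W| ≥ q^(m-3) ≥ |G|`. -/

open Finset Real

section Weight

variable {q : ℕ}

def weight {n : ℕ} (x : Fin n → ZMod q) : ℕ := ∑ i, (x i).val

lemma wsub_zero_self {n : ℕ} (z : Fin n → ZMod q) (h : 0 + n ≤ n) : wsub z 0 n h = weight z := by
  simp only [wsub, weight, Nat.zero_add]

lemma wsub_zero_eq_weight_init {n : ℕ} (y : Fin (n + 1) → ZMod q) (h : 0 + n ≤ n + 1) :
    wsub y 0 n h = weight (Fin.init y) := by
  simp only [wsub, weight, Fin.init, Nat.zero_add]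
  rfl

lemma wsub_one_eq_weight_tail {n : ℕ} (y : Fin (n + 1) → ZMod q) (h : 1 + n ≤ n + 1) :
    wsub y 1 n h = weight (Fin.tail y) := by
  simp only [wsub, weight, Fin.tail, Nat.add_comm 1]
  rfl

end Weight

section Hoeffding

variable (q : ℕ) [NeZero q]

lemma sum_exp_centered_le (t : ℝ) :
    ∑ v : ZMod q, exp (t * ((v.val : ℝ) - (q - 1) / 2)) ≤ q * exp (t ^ 2 * (q - 1) ^ 2 / 8) := by
  set μ : ℝ := ((q : ℝ) - 1) / 2 with hμ
  set a : ℕ → ℝ := fun k => t * ((k : ℝ) - μ)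
  have hval : ∑ v : ZMod q, exp (a v.val) = ∑ k ∈ range q, exp (a k) :=
    sum_nbij' ZMod.val (fun k => (k : ZMod q)) (fun v _ => mem_range.2 (ZMod.val_lt v))
      (fun _ _ => mem_univ _) (fun v _ => ZMod.natCast_zmod_val v)
      (fun k hk => ZMod.val_cast_of_lt (mem_range.1 hk)) (fun _ _ => rfl)
  -- the reflection `k ↦ q - 1 - k` negates `a k`, so the sum equals the sum of `cosh (a k)`
  have hreflect : ∑ k ∈ range q, exp (a k) = ∑ k ∈ range q, exp (-a k) := by
    rw [← sum_range_reflect]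
    refine sum_congr rfl fun k hk => ?_
    have hk : k + 1 ≤ q := mem_range.1 hk
    simp only [a, μ, Nat.cast_sub (Nat.le_sub_one_of_lt hk), Nat.cast_sub (by omega : 1 ≤ q)]
    ring_nf
  have hcosh : ∑ k ∈ range q, exp (a k) = ∑ k ∈ range q, cosh (a k) := by
    simp only [cosh_eq, ← sum_div, sum_add_distrib, ← hreflect]
    ring
  have hbound : ∀ k ∈ range q, cosh (a k) ≤ exp (t ^ 2 * (q - 1) ^ 2 / 8) := fun k hk => by
    have hk : (k : ℝ) + 1 ≤ q := by exact_mod_cast mem_range.1 hk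
    calc cosh (a k) ≤ cosh (t * μ) := by
          rw [cosh_le_cosh, abs_mul, abs_mul, abs_of_nonneg (by rw [hμ]; linarith : 0 ≤ μ)]
          exact mul_le_mul_of_nonneg_left
            (abs_le.2 ⟨by rw [hμ]; linarith, by rw [hμ]; linarith⟩) (abs_nonneg t)
      _ ≤ exp ((t * μ) ^ 2 / 2) := cosh_le_exp_half_sq _
      _ = exp (t ^ 2 * (q - 1) ^ 2 / 8) := by rw [hμ]; ring_nf
  calc _ = ∑ k ∈ range q, cosh (a k) := by rw [← hcosh, ← hval]
    _ ≤ _ := by simpa using sum_le_sum hbound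

lemma sum_exp_centered_weight_le (n : ℕ) (t : ℝ) :
    ∑ x : Fin n → ZMod q, exp (t * ((weight x : ℝ) - (q - 1) / 2 * n))
      ≤ q ^ n * exp (n * (t ^ 2 * (q - 1) ^ 2 / 8)) := by
  have hprod : ∀ x : Fin n → ZMod q, exp (t * ((weight x : ℝ) - (q - 1) / 2 * n))
      = ∏ i, exp (t * (((x i).val : ℝ) - (q - 1) / 2)) := fun x => by
    rw [← exp_sum, weight]
    push_cast
    simp only [mul_sub, ← mul_sum, sum_sub_distrib, sum_const, card_univ, Fintype.card_fin,
      nsmul_eq_mul]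
    ring_nf
  calc _ = (∑ v : ZMod q, exp (t * ((v.val : ℝ) - (q - 1) / 2))) ^ n := by
        simp only [hprod, Fintype.sum_pow]
    _ ≤ (q * exp (t ^ 2 * (q - 1) ^ 2 / 8)) ^ n :=
        pow_le_pow_left₀ (by positivity) (sum_exp_centered_le q t) n
    _ = _ := by rw [mul_pow, ← exp_nat_mul]

noncomputable def unbalanced (n : ℕ) (ε : ℝ) : Finset (Fin n → ZMod q) :=
  univ.filter fun x => ε * n < |(weight x : ℝ) - (q - 1) / 2 * n|

lemma exp_abs_le_exp_add_exp_neg (s : ℝ) : exp |s| ≤ exp s + exp (-s) := by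
  rcases abs_choice s with h | h <;> rw [h] <;> linarith [exp_pos s, exp_pos (-s)]

lemma card_unbalanced_le (hq : 1 < q) (n : ℕ) {ε : ℝ} (hε : 0 ≤ ε) :
    (#(unbalanced q n ε) : ℝ) ≤ 2 * q ^ n * exp (-(2 * ε ^ 2 * n / (q - 1) ^ 2)) := by
  have hΔ : (0 : ℝ) < q - 1 := sub_pos.2 (by exact_mod_cast hq)
  -- Chernoff's bound for both tails at once, at the optimal parameter `t`
  set t : ℝ := 4 * ε / (q - 1) ^ 2
  set d : (Fin n → ZMod q) → ℝ := fun x => (weight x : ℝ) - (q - 1) / 2 * n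
  have ht : 0 ≤ t := by positivity
  have htail : ∀ x ∈ unbalanced q n ε, exp (t * (ε * n)) ≤ exp (t * d x) + exp (-t * d x) :=
    fun x hx => calc
      exp (t * (ε * n)) ≤ exp |t * d x| := by
        rw [exp_le_exp, abs_mul, abs_of_nonneg ht]
        exact mul_le_mul_of_nonneg_left (mem_filter.1 hx).2.le ht
      _ ≤ _ := by rw [neg_mul]; exact exp_abs_le_exp_add_exp_neg _
  have hchernoff : #(unbalanced q n ε) * exp (t * (ε * n))
      ≤ 2 * q ^ n * exp (n * (t ^ 2 * (q - 1) ^ 2 / 8)) := calc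
    _ ≤ ∑ x ∈ unbalanced q n ε, (exp (t * d x) + exp (-t * d x)) := by
        simpa using card_nsmul_le_sum _ _ _ htail
    _ ≤ ∑ x, (exp (t * d x) + exp (-t * d x)) :=
        sum_le_sum_of_subset_of_nonneg (subset_univ _) fun _ _ _ => by positivity
    _ ≤ _ := by
        have h := add_le_add (sum_exp_centered_weight_le q n t)
          (sum_exp_centered_weight_le q n (-t))
        rw [neg_sq] at h
        rw [sum_add_distrib]
        linarith
  have hexp : exp (-(2 * ε ^ 2 * n / (q - 1) ^ 2))
      = exp (n * (t ^ 2 * (q - 1) ^ 2 / 8)) / exp (t * (ε * n)) := by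
    rw [← exp_sub]
    congr 1
    simp only [t]
    field_simp
    ring
  rw [hexp, ← mul_div_assoc, le_div_iff₀ (exp_pos _)]
  exact hchernoff

end Hoeffding

section Tuples

variable {α : Type*} [Fintype α] [DecidableEq α] {n : ℕ}

lemma card_filter_tail_mem (s : Finset (Fin n → α)) :
    #(univ.filter fun y : Fin (n + 1) → α => Fin.tail y ∈ s) = Fintype.card α * #s := by
  rw [← card_univ, ← card_product]
  refine card_nbij' (fun y => (y 0, Fin.tail y)) (fun p => Fin.cons p.1 p.2) ?_ ?_ ?_ ?_
  · intro y hy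
    simpa using (mem_filter.1 hy).2
  · intro p hp
    simpa [Fin.tail_cons] using (mem_product.1 hp).2
  · intro y _
    exact Fin.cons_self_tail y
  · intro p _
    simp [Fin.tail_cons]

lemma card_filter_init_mem (s : Finset (Fin n → α)) :
    #(univ.filter fun y : Fin (n + 1) → α => Fin.init y ∈ s) = Fintype.card α * #s := by
  rw [← card_univ, ← card_product]
  refine card_nbij' (fun y => (y (Fin.last n), Fin.init y)) (fun p => Fin.snoc p.2 p.1)
    ?_ ?_ ?_ ?_
  · intro y hy
    simpa using (mem_filter.1 hy).2
  · intro p hp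
    simpa [Fin.init_snoc] using (mem_product.1 hp).2
  · intro y _
    exact Fin.snoc_init_self y
  · intro p _
    simp [Fin.init_snoc]

end Tuples

lemma abs_sub_mul_le_mul_iff {μ ε n w : ℝ} :
    |w - μ * n| ≤ ε * n ↔ (μ - ε) * n ≤ w ∧ w ≤ (μ + ε) * n := by
  rw [abs_sub_le_iff]
  constructor <;> rintro ⟨h₁, h₂⟩ <;> constructor <;> linarith

section Counting

variable {q : ℕ} [NeZero q]

lemma mem_unbalanced_iff {n : ℕ} {ε : ℝ} (x : Fin n → ZMod q) :
    x ∈ unbalanced q n ε ↔ ¬((((q : ℝ) - 1) / 2 - ε) * n ≤ weight x ∧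
      (weight x : ℝ) ≤ (((q : ℝ) - 1) / 2 + ε) * n) := by
  rw [unbalanced, mem_filter, ← abs_sub_mul_le_mul_iff, not_le]
  exact and_iff_right (mem_univ x)

lemma Gset_subset (m : ℕ) (ε : ℝ) :
    Gset q m ε ⊆ ↑(univ.filter (fun y : Fin (m + 1) → ZMod q => Fin.init y ∈ unbalanced q m ε) ∪
      univ.filter (fun y : Fin (m + 1) → ZMod q => Fin.tail y ∈ unbalanced q m ε)) := by
  rintro y ⟨a, ha, hy⟩
  obtain rfl | rfl : a = 0 ∨ a = 1 := by omega
  · rw [wsub_zero_eq_weight_init, ← mem_unbalanced_iff] at hy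
    simp [hy]
  · rw [wsub_one_eq_weight_tail, ← mem_unbalanced_iff] at hy
    simp [hy]

lemma card_Gset_le (m : ℕ) (ε : ℝ) :
    Nat.card (Gset q m ε) ≤ 2 * (q * #(unbalanced q m ε)) := by
  rw [Nat.card_coe_set_eq]
  calc (Gset q m ε).ncard ≤ _ := Set.ncard_le_ncard (Gset_subset m ε) (Finset.finite_toSet _)
    _ ≤ _ := by
      rw [Set.ncard_coe_finset]
      refine (card_union_le _ _).trans ?_
      rw [card_filter_init_mem, card_filter_tail_mem, ZMod.card]
      omega

lemma card_Wset_add_card_unbalanced (n : ℕ) (ε : ℝ) :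
    Nat.card (Wset q n n ((((q : ℝ) - 1) / 2 - ε) * n) ((((q : ℝ) - 1) / 2 + ε) * n))
      + #(unbalanced q n ε) = q ^ n := by
  have hW : Wset q n n ((((q : ℝ) - 1) / 2 - ε) * n) ((((q : ℝ) - 1) / 2 + ε) * n)
      = ↑(unbalanced q n ε)ᶜ := by
    ext z
    simp only [Wset, Set.mem_ofPred_eq, coe_compl, Set.mem_compl_iff, mem_coe,
      mem_unbalanced_iff, not_not]
    constructor
    · intro hz
      have h0 := hz 0 (by omega)
      rwa [wsub_zero_self] at h0
    · intro hz a ha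
      obtain rfl : a = 0 := by omega
      rwa [wsub_zero_self]
  rw [hW, Nat.card_coe_set_eq, Set.ncard_coe_finset, card_compl_add_card, Fintype.card_fun,
    ZMod.card, Fintype.card_fin]

end Counting

lemma exp_div_four_lt_self {k : ℕ} (h5 : 5 ≤ k) (h8 : k ≤ 8) : exp (k / 4) < k := by
  have hk : (0 : ℝ) ≤ k := k.cast_nonneg
  rw [← pow_lt_pow_iff_left₀ (exp_pos _).le hk (by norm_num : (4 : ℕ) ≠ 0), ← exp_nat_mul]
  calc exp (((4 : ℕ) : ℝ) * (k / 4)) = exp 1 ^ k := by rw [← exp_nat_mul]; ring_nf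
    _ < 2.7182818286 ^ k := pow_lt_pow_left₀ exp_one_lt_d9 (exp_pos 1).le (by omega)
    _ < (k : ℝ) ^ 4 := by interval_cases k <;> norm_num

lemma nine_le_of_le_exp {q k : ℕ} (hq : 2 ≤ q) (hk : 2 * q ^ 2 ≤ k + 3) {c : ℝ} (hc : c < 1 / 4)
    (h : (k : ℝ) ≤ exp (c * k)) : 9 ≤ k := by
  rcases hq.eq_or_lt with rfl | hq3
  · by_contra! hk8
    have : exp (c * k) ≤ exp (k / 4) := exp_le_exp.2 (by nlinarith [(k.cast_nonneg : (0 : ℝ) ≤ k)])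
    linarith [exp_div_four_lt_self (by omega) (by omega : k ≤ 8)]
  · nlinarith

lemma sq_add_eight_mul_le_exp {x c : ℝ} (hx : 9 ≤ x) (h : x ≤ exp (c * x)) :
    x ^ 2 + 8 * x ≤ exp (2 * c * (x + 2)) := by
  have hexp2 : exp 2 < 9 := by
    have h := exp_one_lt_d9
    rw [show (2 : ℝ) = 1 + 1 by norm_num, exp_add]
    nlinarith [exp_pos 1]
  have hcx : 2 ≤ c * x := (exp_lt_exp.1 (by linarith)).le
  have hc : 0 ≤ c := by nlinarith
  calc x ^ 2 + 8 * x ≤ x ^ 2 * (1 + 4 * c) := by nlinarith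
    _ ≤ exp (c * x) ^ 2 * exp (4 * c) := by
        gcongr
        linarith [add_one_le_exp (4 * c)]
    _ = exp (2 * c * (x + 2)) := by rw [← exp_nat_mul, ← exp_add]; ring_nf

lemma four_mul_pow_four_le {q : ℕ} {x : ℝ} (hq : 2 ≤ q) (hx : 2 * (q : ℝ) ^ 2 - 3 ≤ x) :
    4 * (q : ℝ) ^ 4 ≤ x ^ 2 + 8 * x := by
  have hq : (2 : ℝ) ≤ q := by exact_mod_cast hq
  nlinarith [mul_nonneg (sub_nonneg.2 hx) (by nlinarith : (0 : ℝ) ≤ x + 2 * q ^ 2 + 5)]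

lemma sub_two_le_exp_of_log_bound {q m : ℕ} {ε₀ : ℝ} (hq : 2 ≤ q) (hε0 : 0 < ε₀) (hm : 3 ≤ m)
    (hm2 : ((q : ℝ) - 1) ^ 2 / ε₀ ^ 2 * log ((m : ℝ) - 2) + 2 ≤ m) :
    (m : ℝ) - 2 ≤ exp (ε₀ ^ 2 / (q - 1) ^ 2 * ((m : ℝ) - 2)) := by
  have hq1 : (q : ℝ) - 1 ≠ 0 := by
    have : (2 : ℝ) ≤ q := by exact_mod_cast hq
    linarith
  have hm3 : (3 : ℝ) ≤ m := by exact_mod_cast hm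
  rw [← log_le_iff_le_exp (by linarith)]
  calc log ((m : ℝ) - 2) = ε₀ ^ 2 / (q - 1) ^ 2 * ((q - 1) ^ 2 / ε₀ ^ 2 * log ((m : ℝ) - 2)) := by
        field_simp
    _ ≤ _ := mul_le_mul_of_nonneg_left (by linarith) (by positivity)

lemma exists_injective_of_natCard_le {α β : Type*} [Finite α] [Finite β]
    (h : Nat.card α ≤ Nat.card β) : ∃ f : α → β, Function.Injective f := by
  have := Fintype.ofFinite α
  have := Fintype.ofFinite β
  rw [Nat.card_eq_fintype_card, Nat.card_eq_fintype_card] at h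
  obtain ⟨f⟩ := Function.Embedding.nonempty_of_card_le h
  exact ⟨f, f.injective⟩

section Bounds

variable {q : ℕ} [NeZero q] {ε : ℝ}

lemma card_Gset_le_pow (hq : 1 < q) (hε : 0 ≤ ε) {m : ℕ} (hm : 3 ≤ m)
    (h : 4 * (q : ℝ) ^ 4 ≤ exp (2 * ε ^ 2 * m / (q - 1) ^ 2)) :
    Nat.card (Gset q m ε) ≤ q ^ (m - 3) := by
  have hG : (Nat.card (Gset q m ε) : ℝ) ≤ 2 * (q * #(unbalanced q m ε)) := by
    exact_mod_cast card_Gset_le m ε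
  have hU := card_unbalanced_le q hq m hε
  have hexp : exp (-(2 * ε ^ 2 * m / (q - 1) ^ 2)) ≤ (4 * (q : ℝ) ^ 4)⁻¹ := by
    rw [exp_neg]
    exact inv_anti₀ (by positivity) h
  have hpow : (q : ℝ) ^ (m + 1) = q ^ (m - 3) * q ^ 4 := by
    rw [← pow_add]
    congr 1
    omega
  suffices (Nat.card (Gset q m ε) : ℝ) ≤ q ^ (m - 3) by exact_mod_cast this
  calc (Nat.card (Gset q m ε) : ℝ)
      ≤ 4 * q ^ (m + 1) * exp (-(2 * ε ^ 2 * m / (q - 1) ^ 2)) := by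
        rw [pow_succ]
        nlinarith [(q.cast_nonneg : (0 : ℝ) ≤ q)]
    _ ≤ 4 * q ^ (m + 1) * (4 * (q : ℝ) ^ 4)⁻¹ := by gcongr
    _ = q ^ (m - 3) := by
        rw [hpow]
        field_simp

lemma pow_le_card_Wset (hq : 2 ≤ q) (hε : 0 ≤ ε) {n : ℕ} (hn : 1 ≤ n)
    (h : 4 ≤ exp (2 * ε ^ 2 * n / (q - 1) ^ 2)) :
    q ^ (n - 1) ≤ Nat.card (Wset q n n ((((q : ℝ) - 1) / 2 - ε) * n)
      ((((q : ℝ) - 1) / 2 + ε) * n)) := by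
  have hsum : (Nat.card (Wset q n n ((((q : ℝ) - 1) / 2 - ε) * n)
      ((((q : ℝ) - 1) / 2 + ε) * n)) : ℝ) + #(unbalanced q n ε) = q ^ n := by
    exact_mod_cast card_Wset_add_card_unbalanced n ε
  have hU := card_unbalanced_le q hq n hε
  have hexp : exp (-(2 * ε ^ 2 * n / (q - 1) ^ 2)) ≤ 4⁻¹ := by
    rw [exp_neg]
    exact inv_anti₀ (by positivity) h
  have hpow : (q : ℝ) ^ n = q ^ (n - 1) * q := by
    rw [← pow_succ]
    congr 1
    omega
  have hq : (2 : ℝ) ≤ q := by exact_mod_cast hq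
  have hU' : (#(unbalanced q n ε) : ℝ) ≤ q ^ n / 2 := by
    nlinarith [pow_pos (by linarith : (0 : ℝ) < q) n]
  suffices (q : ℝ) ^ (n - 1) ≤ Nat.card (Wset q n n ((((q : ℝ) - 1) / 2 - ε) * n)
      ((((q : ℝ) - 1) / 2 + ε) * n)) by exact_mod_cast this
  nlinarith [pow_pos (by linarith : (0 : ℝ) < q) (n - 1)]

end Bounds

theorem stmt19 (q : ℕ) (hq : 2 ≤ q) (ε₀ : ℝ) (hε0 : 0 < ε₀) (hε : ε₀ < ((q : ℝ) - 1) / 2)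
    (m : ℕ) (hm1 : 2 * q ^ 2 - 1 ≤ m)
    (hm2 : ((q : ℝ) - 1) ^ 2 / ε₀ ^ 2 * Real.log ((m : ℝ) - 2) + 2 ≤ (m : ℝ)) :
    Nat.card (Gset q m ε₀) ≤ q ^ (m - 3) ∧
    ∃ f : Gset q m ε₀ →
        Wset q (m - 2) (m - 2)
          ((((q : ℝ) - 1) / 2 - ε₀) * ((m - 2 : ℕ) : ℝ))
          ((((q : ℝ) - 1) / 2 + ε₀) * ((m - 2 : ℕ) : ℝ)),
      Function.Injective f := by
  have : NeZero q := ⟨by omega⟩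
  have hq2 : 4 ≤ q ^ 2 := Nat.pow_le_pow_left hq 2
  set c : ℝ := ε₀ ^ 2 / (q - 1) ^ 2
  set x : ℝ := ((m - 2 : ℕ) : ℝ) with hx
  have hxm : x = m - 2 := by rw [hx, Nat.cast_sub (by omega)]; norm_num
  have hqm : 2 * (q : ℝ) ^ 2 ≤ m + 1 := by exact_mod_cast (show 2 * q ^ 2 ≤ m + 1 by omega)
  have hlog : x ≤ exp (c * x) := hxm ▸ sub_two_le_exp_of_log_bound hq hε0 (by omega) hm2
  have hc : c < 1 / 4 := by rw [div_lt_iff₀ (by nlinarith)]; nlinarith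
  have hx9 : 9 ≤ m - 2 := nine_le_of_le_exp hq (by omega) hc hlog
  have hGexp : 4 * (q : ℝ) ^ 4 ≤ exp (2 * ε₀ ^ 2 * m / (q - 1) ^ 2) := calc
    _ ≤ x ^ 2 + 8 * x := four_mul_pow_four_le hq (by linarith)
    _ ≤ exp (2 * c * (x + 2)) := sq_add_eight_mul_le_exp (by rw [hx]; exact_mod_cast hx9) hlog
    _ = _ := by congr 1; rw [hxm]; field_simp; ring
  have hWexp : 4 ≤ exp (2 * ε₀ ^ 2 * x / (q - 1) ^ 2) := calc
    (4 : ℝ) ≤ x ^ 2 := by nlinarith [(by rw [hx]; exact_mod_cast hx9 : (9 : ℝ) ≤ x)]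
    _ ≤ exp (c * x) ^ 2 := by gcongr
    _ = _ := by rw [← exp_nat_mul]; congr 1; field_simp; ring
  have hG := card_Gset_le_pow (by omega) hε0.le (by omega) hGexp
  have hW := pow_le_card_Wset hq hε0.le (by omega) hWexp
  rw [show m - 2 - 1 = m - 3 by omega] at hW
  exact ⟨hG, exists_injective_of_natCard_le (hG.trans hW)⟩
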